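/- Let n ≥ 1, and for each i ∈ {1,...,n} let p_i be a probability distribution on {0,1,...,i-1} (i.e., p_i(j) ≥ 0 and ∑_{j=0}^{i-1} p_i(j) = 1). Consider the product distribution P(z) = ∏_{i=1}^n p_i(z_i) over branching structures z = (z_1,...,z_n) with z_i ∈ {0,...,i-1}. Fix sources s_1,...,s_n ∈ {1,...,S} and define root(i, z) as the root source of event i under z. Define r_i(s) = P({z : root(i,z) = s}). Then the recursion r_i(s) = 1[s_i = s]·p_i(0) + ∑_{j=1}^{i-1} r_j(s)·p_i(j) holds for all i and s. -/

import Mathlib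

/-!
Condition on the parent `z i` of event `i`: the root of `i` is `s i` if `z i = none` and the root
of `j` if `z i = some j`. For `j < i` the root of `j` only depends on `z 0, …, z j`, so under the
product weights it is independent of `z i`, whose law is `p i`; the two cases therefore contribute
`1[s i = σ] · p i none` and `r j σ · p i (some j)`.
-/

/-- Root source of event `i` (0-indexed) under a branching structure `z`, where
`z i = none` marks `i` as an immigrant (root source is its own source `s i`) and
`z i = some j` means event `j` (with `j < i`) is the parent of `i`. -/
def finRoot {n : ℕ} (s : Fin n → ℕ) (z : ∀ i : Fin n, Option (Fin i.1)) : Fin n → ℕ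
  | i => match z i with
    | none => s i
    | some j => finRoot s z ⟨j.1, j.2.trans i.2⟩
termination_by i => i.1
decreasing_by exact j.2

section ProductWeights

variable {ι R : Type*} [Fintype ι] [DecidableEq ι] [CommSemiring R] {β : ι → Type*}
  [∀ i, Fintype (β i)]

theorem sum_prod_mul_apply_mul_of_update_eq (p : ∀ k, β k → R) {i : ι}
    (hp : ∑ b, p i b = 1) (f : β i → R) (G : (∀ k, β k) → R)
    (hG : ∀ z b, G (Function.update z i b) = G z) :
    ∑ z, (∏ k, p k (z k)) * (f (z i) * G z) =
      (∑ b, p i b * f b) * ∑ z, (∏ k, p k (z k)) * G z := by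
  set e := Equiv.piSplitAt i β
  have hsum (F : (∀ k, β k) → R) : ∑ z, F z = ∑ b, ∑ w, F (e.symm (b, w)) := by
    rw [← e.symm.sum_comp, Fintype.sum_prod_type]
  have he (b : β i) w : e.symm (b, w) i = b := by simp [e]
  have hprod (b : β i) w :
      ∏ k, p k (e.symm (b, w) k) = p i b * ∏ k : {k // k ≠ i}, p k (w k) := by
    rw [Fintype.prod_eq_mul_prod_subtype_ne _ i, he]
    congr 1
    refine Finset.prod_congr rfl fun k _ => ?_
    simp [e, k.2]
  have hGe (b b' : β i) w : G (e.symm (b, w)) = G (e.symm (b', w)) := by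
    rw [← hG (e.symm (b', w)) b]
    congr 1
    ext k
    by_cases hk : k = i
    · subst hk
      simp [he]
    · simp [e, hk]
  have hmarg (b : β i) : ∑ z, (∏ k, p k (z k)) * G z =
      ∑ w, (∏ k : {k // k ≠ i}, p k (w k)) * G (e.symm (b, w)) := by
    simp_rw [hsum, hprod, hGe _ b, mul_assoc, ← Finset.mul_sum, ← Finset.sum_mul, hp, one_mul]
  rw [hsum, Finset.sum_mul]
  refine Finset.sum_congr rfl fun b _ => ?_
  rw [hmarg b, Finset.mul_sum]
  refine Finset.sum_congr rfl fun w _ => ?_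
  rw [hprod, he]
  ring

end ProductWeights

section finRoot

variable {n : ℕ} (s : Fin n → ℕ) (z : ∀ i : Fin n, Option (Fin i.1))

theorem finRoot_of_eq_none {i : Fin n} (h : z i = none) : finRoot s z i = s i := by
  rw [finRoot, h]

theorem finRoot_of_eq_some {i : Fin n} {j : Fin i.1} (h : z i = some j) :
    finRoot s z i = finRoot s z ⟨j.1, j.2.trans i.2⟩ := by
  rw [finRoot, h]

theorem finRoot_congr (z' : ∀ i : Fin n, Option (Fin i.1)) :
    ∀ i : Fin n, (∀ k ≤ i, z k = z' k) → finRoot s z i = finRoot s z' i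
  | i, h => by
    cases hz : z i with
    | none =>
      rw [finRoot_of_eq_none s z hz, finRoot_of_eq_none s z' ((h i le_rfl).symm.trans hz)]
    | some j =>
      rw [finRoot_of_eq_some s z hz, finRoot_of_eq_some s z' ((h i le_rfl).symm.trans hz)]
      exact finRoot_congr z' ⟨j.1, j.2.trans i.2⟩ fun k hk => h k (hk.trans (show (⟨j.1, _⟩ : Fin n) ≤ i from j.2.le))
termination_by i => i.1
decreasing_by exact j.2

theorem finRoot_update_of_lt {i j : Fin n} (hj : j < i) (b : Option (Fin i.1)) :
    finRoot s (Function.update z i b) j = finRoot s z j :=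
  finRoot_congr s _ z j fun _ hk => Function.update_of_ne (Fin.ne_of_lt (hk.trans_lt hj)) b z

theorem boole_finRoot_eq {R : Type*} [Semiring R] (i : Fin n) (σ : ℕ) :
    (if finRoot s z i = σ then 1 else 0 : R) =
      (if z i = none then 1 else 0) * (if s i = σ then 1 else 0) +
        ∑ j : Fin i.1, (if z i = some j then 1 else 0) *
          (if finRoot s z ⟨j.1, j.2.trans i.2⟩ = σ then 1 else 0) := by
  cases hz : z i with
  | none => simp [finRoot_of_eq_none s z hz]
  | some j =>
    rw [Fintype.sum_eq_single j fun x hx => by simp [Ne.symm hx]]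
    simp [finRoot_of_eq_some s z hz]

end finRoot

theorem stmt2_general (n : ℕ) (s : Fin n → ℕ)
    (p : ∀ i : Fin n, Option (Fin i.1) → ℝ)
    (hp1 : ∀ i, ∑ j, p i j = 1)
    (r : Fin n → ℕ → ℝ)
    (hr : ∀ i σ, r i σ =
      ∑ z : ∀ i : Fin n, Option (Fin i.1),
        (if finRoot s z i = σ then ∏ k, p k (z k) else 0)) :
    ∀ (i : Fin n) (σ : ℕ),
      r i σ = (if s i = σ then p i none else 0)
        + ∑ j : Fin i.1, r ⟨j.1, j.2.trans i.2⟩ σ * p i (some j) := by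
  intro i σ
  have hmass : ∑ z : ∀ k : Fin n, Option (Fin k.1), ∏ k, p k (z k) = 1 := by
    rw [← Fintype.prod_sum]
    exact Finset.prod_eq_one fun k _ => hp1 k
  have hr' (j : Fin n) :
      r j σ = ∑ z, (∏ k, p k (z k)) * (if finRoot s z j = σ then 1 else 0) := by
    simp_rw [hr, mul_boole]
  have himmigrant : ∑ z : ∀ k : Fin n, Option (Fin k.1), (∏ k, p k (z k)) *
      ((if z i = none then 1 else 0) * (if s i = σ then 1 else 0)) =
        if s i = σ then p i none else 0 := by
    rw [sum_prod_mul_apply_mul_of_update_eq p (hp1 i) (fun b => if b = none then 1 else 0)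
      (fun _ => if s i = σ then 1 else 0) fun _ _ => rfl, ← Finset.sum_mul, hmass]
    simp
  have hoffspring (j : Fin i.1) : ∑ z : ∀ k : Fin n, Option (Fin k.1), (∏ k, p k (z k)) *
      ((if z i = some j then 1 else 0) *
        (if finRoot s z ⟨j.1, j.2.trans i.2⟩ = σ then 1 else 0)) =
        r ⟨j.1, j.2.trans i.2⟩ σ * p i (some j) := by
    rw [sum_prod_mul_apply_mul_of_update_eq p (hp1 i) (fun b => if b = some j then 1 else 0)
      (fun z => if finRoot s z ⟨j.1, j.2.trans i.2⟩ = σ then 1 else 0)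
      fun z b => by rw [finRoot_update_of_lt s z j.2], ← hr']
    simp [mul_comm]
  simp_rw [hr' i, boole_finRoot_eq s _ i σ, mul_add, Finset.mul_sum, Finset.sum_add_distrib,
    himmigrant]
  rw [Finset.sum_comm]
  simp_rw [hoffspring]

/-- Under the product distribution `P(z) = ∏ i, p i (z i)` over
branching structures (with `p i` a probability distribution on the `i + 1` possible
parents of event `i`), the root source probabilities
`r i σ = P({z : root(i, z) = σ})` satisfy the dynamic-programming recursion
`r i σ = 1[s i = σ]·p i(immigrant) + ∑_{j<i} r j σ · p i (some j)`. -/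
theorem stmt2 (n S : ℕ) (hn : 1 ≤ n) (hS : 1 ≤ S)
    (s : Fin n → ℕ) (hs : ∀ i, 1 ≤ s i ∧ s i ≤ S)
    (p : ∀ i : Fin n, Option (Fin i.1) → ℝ)
    (hp0 : ∀ i j, 0 ≤ p i j) (hp1 : ∀ i, ∑ j, p i j = 1)
    (r : Fin n → ℕ → ℝ)
    (hr : ∀ i σ, r i σ =
      ∑ z : ∀ i : Fin n, Option (Fin i.1),
        (if finRoot s z i = σ then ∏ k, p k (z k) else 0)) :
    ∀ (i : Fin n) (σ : ℕ),
      r i σ = (if s i = σ then p i none else 0)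
        + ∑ j : Fin i.1, r ⟨j.1, j.2.trans i.2⟩ σ * p i (some j) :=
  stmt2_general n s p hp1 r hr
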